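/- arXiv:2603.14959 — 6 statements merged into one kernel-verified Lean document; each statement's English description precedes it below -/
import Mathlib

section
/- Let N, N_t, P be positive integers, let h_{t,i} ∈ ℂ for t = 1,…,N_t and i = 1,…,P be channel gains, let k_i, l_i be integers (the Doppler and delay shifts of path i), and let k̃_t, l̃_t be integers (the cyclic Doppler and delay shift steps applied at transmit antenna t). Then the sum of the per-antenna time-domain channel matrices composed with the TD-CDDS precoding matrices satisfies Σ_{t=1}^{N_t} ( Σ_{i=1}^{P} h_{t,i} Δ_N^{k_i} Π_N^{l_i} ) · ( Δ_N^{k̃_t} Π_N^{l̃_t} ) = Σ_{t=1}^{N_t} Σ_{i=1}^{P} h_{t,i} e^{−2πi k̃_t l_i / N} Δ_N^{k_i + k̃_t} Π_N^{l_i + l̃_t}. In particular, the multi-antenna system with time-domain cyclic delay-Doppler shift precoding is equivalent to a single-antenna system whose paths have delays l_i + l̃_t, Dopplers k_i + k̃_t, and gains h_{t,i} e^{−2πi k̃_t l_i / N}. -/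
open Matrix Complex

/-- The `N × N` forward cyclic-shift matrix raised to the (integer) power `l`:
`(Π_N^l)[p,q] = 1` if `p ≡ q + l (mod N)` and `0` otherwise. -/
noncomputable def cyclicShift (N : ℕ) (l : ℤ) : Matrix (Fin N) (Fin N) ℂ :=
  Matrix.of fun p q => if ((p : ℕ) : ZMod N) = ((q : ℕ) : ZMod N) + (l : ZMod N) then 1 else 0

/-- The digital frequency-shift matrix `Δ_N^k = diag(e^{2πi k n / N}, n = 0,…,N−1)`. -/
noncomputable def dopplerShift (N : ℕ) (k : ℤ) : Matrix (Fin N) (Fin N) ℂ :=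
  Matrix.diagonal fun n : Fin N =>
    Complex.exp (2 * Real.pi * Complex.I * (k : ℂ) * ((n : ℕ) : ℂ) / (N : ℂ))

/-!
The entries `e^{2πi k n / N}` of `Δ_N^k` are values of the standard additive character of
`ZMod N` at `k n`, so they only depend on `n` modulo `N`. Hence conjugating `Δ_N^k` by the cyclic
shift `Π_N^l` only multiplies it by the character value at `-k l`:
`Π_N^l Δ_N^k = e^{-2πi k l / N} Δ_N^k Π_N^l`. Together with `Δ_N^k Δ_N^{k'} = Δ_N^{k+k'}` and
`Π_N^l Π_N^{l'} = Π_N^{l+l'}`, every product of a path matrix with a precoding matrix is a single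
path matrix times a phase, and the theorem follows term by term.
-/
open scoped Real

lemma Fin.natCast_zmod_eq_iff {N : ℕ} [NeZero N] (q : Fin N) (x : ZMod N) :
    ((q : ℕ) : ZMod N) = x ↔ q = ⟨x.val, x.val_lt⟩ := by
  rw [Fin.ext_iff, ← (ZMod.val_injective N).eq_iff, ZMod.val_natCast_of_lt q.isLt]

lemma cyclicShift_mul_apply {N : ℕ} [NeZero N] (l : ℤ) (A : Matrix (Fin N) (Fin N) ℂ)
    (p r : Fin N) :
    (cyclicShift N l * A) p r = A ⟨(((p : ℕ) : ZMod N) - l).val, ZMod.val_lt _⟩ r := by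
  simp only [cyclicShift, mul_apply, of_apply, ite_mul, one_mul, zero_mul, ← sub_eq_iff_eq_add,
    eq_comm (a := ((p : ℕ) : ZMod N) - l), Fin.natCast_zmod_eq_iff, Finset.sum_ite_eq',
    Finset.mem_univ, if_true]

lemma cyclicShift_mul_cyclicShift (N : ℕ) (l₁ l₂ : ℤ) :
    cyclicShift N l₁ * cyclicShift N l₂ = cyclicShift N (l₁ + l₂) := by
  ext p r
  have : NeZero N := NeZero.of_pos p.pos
  rw [cyclicShift_mul_apply]
  simp only [cyclicShift, of_apply, ZMod.natCast_zmod_val, Int.cast_add, sub_eq_iff_eq_add,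
    add_assoc, add_comm (l₂ : ZMod N)]

lemma dopplerShift_mul_dopplerShift (N : ℕ) (k₁ k₂ : ℤ) :
    dopplerShift N k₁ * dopplerShift N k₂ = dopplerShift N (k₁ + k₂) := by
  simp only [dopplerShift, diagonal_mul_diagonal, ← Complex.exp_add, ← add_div]
  congr! 3
  push_cast
  ring

lemma dopplerShift_eq_diagonal_stdAddChar {N : ℕ} [NeZero N] (k : ℤ) :
    dopplerShift N k =
      diagonal fun n : Fin N => ZMod.stdAddChar ((k : ZMod N) * ((n : ℕ) : ZMod N)) := by
  simp only [dopplerShift]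
  congr! 2 with n
  rw [show (k : ZMod N) * ((n : ℕ) : ZMod N) = ((k * n : ℤ) : ZMod N) by push_cast; rfl,
    ZMod.stdAddChar_coe]
  push_cast
  ring_nf

lemma cyclicShift_mul_dopplerShift (N : ℕ) (l k : ℤ) :
    cyclicShift N l * dopplerShift N k =
      Complex.exp (-(2 * π * I * k * l / N)) • (dopplerShift N k * cyclicShift N l) := by
  ext p q
  have : NeZero N := NeZero.of_pos p.pos
  have phase : Complex.exp (-(2 * π * I * k * l / N)) =
      ZMod.stdAddChar ((-(k * l) : ℤ) : ZMod N) := by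
    rw [ZMod.stdAddChar_coe]; push_cast; ring_nf
  rw [dopplerShift_eq_diagonal_stdAddChar, phase]
  simp only [cyclicShift, mul_diagonal, diagonal_mul, Matrix.smul_apply, of_apply, smul_eq_mul]
  split_ifs with hpq
  · rw [mul_one, one_mul, ← AddChar.map_add_eq_mul, hpq]
    congr 1; push_cast; ring
  · simp

lemma dopplerShift_mul_cyclicShift_mul_dopplerShift_mul_cyclicShift (N : ℕ) (k l k' l' : ℤ) :
    dopplerShift N k * cyclicShift N l * (dopplerShift N k' * cyclicShift N l') =
      Complex.exp (-(2 * π * I * k' * l / N)) •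
        (dopplerShift N (k + k') * cyclicShift N (l + l')) := by
  rw [Matrix.mul_assoc, ← Matrix.mul_assoc (cyclicShift N l), cyclicShift_mul_dopplerShift,
    Matrix.smul_mul, Matrix.mul_smul, ← Matrix.mul_assoc, ← Matrix.mul_assoc,
    dopplerShift_mul_dopplerShift, Matrix.mul_assoc, cyclicShift_mul_cyclicShift]

theorem tdcdds_equivalent_channel_general (N Nt P : ℕ)
    (h : Fin Nt → Fin P → ℂ) (kp lp : Fin P → ℤ) (kt lt : Fin Nt → ℤ) :
    ∑ t : Fin Nt,
      (∑ i : Fin P, h t i • (dopplerShift N (kp i) * cyclicShift N (lp i))) *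
        (dopplerShift N (kt t) * cyclicShift N (lt t)) =
    ∑ t : Fin Nt, ∑ i : Fin P,
      (h t i * Complex.exp (-(2 * Real.pi * Complex.I * (kt t : ℂ) * (lp i : ℂ) / (N : ℂ)))) •
        (dopplerShift N (kp i + kt t) * cyclicShift N (lp i + lt t)) := by
  simp only [Finset.sum_mul, smul_mul_assoc,
    dopplerShift_mul_cyclicShift_mul_dopplerShift_mul_cyclicShift, smul_smul]

/-- the sum of the per-antenna time-domain channel matrices composed with the
TD-CDDS precoding matrices equals the time-domain channel matrix of an equivalent single-antenna
channel whose paths have delays `l_i + l̃_t`, Dopplers `k_i + k̃_t`, and gains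
`h_{t,i} e^{−2πi k̃_t l_i / N}`. -/
theorem tdcdds_equivalent_channel (N Nt P : ℕ) (hN : 0 < N) (hNt : 0 < Nt) (hP : 0 < P)
    (h : Fin Nt → Fin P → ℂ) (kp lp : Fin P → ℤ) (kt lt : Fin Nt → ℤ) :
    ∑ t : Fin Nt,
      (∑ i : Fin P, h t i • (dopplerShift N (kp i) * cyclicShift N (lp i))) *
        (dopplerShift N (kt t) * cyclicShift N (lt t)) =
    ∑ t : Fin Nt, ∑ i : Fin P,
      (h t i * Complex.exp (-(2 * Real.pi * Complex.I * (kt t : ℂ) * (lp i : ℂ) / (N : ℂ)))) •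
        (dopplerShift N (kp i + kt t) * cyclicShift N (lp i + lt t)) :=
  tdcdds_equivalent_channel_general N Nt P h kp lp kt lt
end

section
/- Let N be an even positive integer, let c₂ be a real number, and let c₁ be a real number such that c := 2N c₁ is an integer. Let k, l be integers. Then the DAFT-domain subchannel matrix H(k,l) = A Δ_N^k Π_N^l Aᴴ has entries, for m, m' ∈ {0,…,N−1}: H(k,l)[m, m'] = e^{(2πi/N)(N c₁ l² − m' l + N c₂ (m'² − m²))} if m' ≡ m + c l − k (mod N), and H(k,l)[m, m'] = 0 otherwise. In particular, each path with integer delay l and integer Doppler k occupies in the DAFT domain exactly the positions determined by the index indicator ind = (2N c₁ l − k) mod N. -/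
open Matrix Complex

/-- The `N × N` unitary DFT matrix with entries `F[m,n] = e^{−2πi m n / N} / √N`. -/
noncomputable def dftMatrix (N : ℕ) : Matrix (Fin N) (Fin N) ℂ :=
  Matrix.of fun m n : Fin N =>
    Complex.exp (-(2 * Real.pi * Complex.I * ((m : ℕ) : ℂ) * ((n : ℕ) : ℂ) / (N : ℂ))) /
      (Real.sqrt N : ℂ)

/-- For a real parameter `c`, the diagonal chirp matrix `Λ_c = diag(e^{−2πi c q²})`. -/
noncomputable def chirpMatrix (N : ℕ) (c : ℝ) : Matrix (Fin N) (Fin N) ℂ :=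
  Matrix.diagonal fun q : Fin N =>
    Complex.exp (-(2 * Real.pi * Complex.I * (c : ℂ) * ((q : ℕ) : ℂ) ^ 2))

/-- The DAFT matrix `A = Λ_{c₂} F Λ_{c₁}`. -/
noncomputable def daft (N : ℕ) (c₁ c₂ : ℝ) : Matrix (Fin N) (Fin N) ℂ :=
  chirpMatrix N c₂ * dftMatrix N * chirpMatrix N c₁

/-- The DAFT-domain subchannel matrix `H(k,l) = A Δ_N^k Π_N^l Aᴴ` of a path with integer
Doppler shift `k` and integer delay shift `l`. -/
noncomputable def subChannel (N : ℕ) (c₁ c₂ : ℝ) (k l : ℤ) : Matrix (Fin N) (Fin N) ℂ :=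
  daft N c₁ c₂ * dopplerShift N k * cyclicShift N l * (daft N c₁ c₂)ᴴ

/-! Write `𝐞 x = exp (2πix)`, so that `A[m,n] = 𝐞(-(c₂m² + mn/N + c₁n²)) / √N`. Since `2Nc₁ ∈ ℤ`
and `N` is even, the chirp `n ↦ 𝐞(c₁n²)` is `N`-periodic on `ℤ`; hence so is each row of `A Δ_N^k`,
and multiplying by `Π_N^l` simply evaluates that row at `q + l`. In
`H[m,m'] = ∑_q (A Δ_N^k Π_N^l)[m,q] · conj A[m',q]` the chirps then cancel up to the cross term
`2c₁ql = cql/N`, so every summand is one fixed phase times `𝐞(qd/N)` with `d = m' + k - m - cl`, and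
this character sum over `q` is `N` or `0` according as `N ∣ d`. -/

open FourierTransform Function

lemma fourierChar_add_intCast (x : ℝ) (n : ℤ) : 𝐞 (x + n) = 𝐞 x := by
  rw [AddChar.map_add_eq_mul, Real.fourierChar_apply' n, Circle.exp_two_pi_mul_int, mul_one]

lemma ZMod.finEquiv_apply (N : ℕ) [NeZero N] (n : Fin N) :
    ZMod.finEquiv N n = ((n : ℕ) : ZMod N) := by
  obtain ⟨N, rfl⟩ := Nat.exists_eq_succ_of_ne_zero (NeZero.ne N)
  exact (Fin.cast_val_eq_self n).symm

lemma sum_fourierChar_mul_div (N : ℕ) [NeZero N] (d : ℤ) :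
    ∑ q : Fin N, (𝐞 ((q : ℕ) * d / N) : ℂ) = if (d : ZMod N) = 0 then (N : ℂ) else 0 := by
  have hterm (q : Fin N) :
      (𝐞 ((q : ℕ) * d / N) : ℂ) = ZMod.stdAddChar (ZMod.finEquiv N q * (d : ZMod N)) := by
    have hcast : ZMod.finEquiv N q * (d : ZMod N) = (((q : ℕ) * d : ℤ) : ZMod N) := by
      push_cast; rw [ZMod.finEquiv_apply]
    rw [hcast, ZMod.stdAddChar_coe, Real.fourierChar_apply]
    congr 1
    push_cast
    ring
  rw [Finset.sum_congr rfl fun q _ => hterm q,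
    Fintype.sum_equiv (ZMod.finEquiv N).toEquiv
      (fun q => ZMod.stdAddChar (ZMod.finEquiv N q * (d : ZMod N)))
      (fun x => ZMod.stdAddChar (x * (d : ZMod N))) fun _ => rfl,
    AddChar.sum_mulShift _ (ZMod.isPrimitive_stdAddChar N), ZMod.card, Nat.cast_ite, Nat.cast_zero]

lemma Function.Periodic.eq_of_intCast_eq {α : Type*} {N : ℕ} {g : ℤ → α} (hg : Periodic g N)
    {a b : ℤ} (hab : (a : ZMod N) = b) : g a = g b := by
  obtain ⟨j, hj⟩ := (ZMod.intCast_eq_intCast_iff_dvd_sub a b N).1 hab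
  rw [show b = a + j * N by linear_combination hj]
  simpa using ((hg.int_mul j) a).symm

lemma mul_cyclicShift_apply_of_periodic {ι : Type*} {N : ℕ} [NeZero N]
    (M : Matrix ι (Fin N) ℂ) (i : ι) {g : ℤ → ℂ} (hg : Periodic g N)
    (hM : ∀ n : Fin N, M i n = g (n : ℕ)) (l : ℤ) (q : Fin N) :
    (M * cyclicShift N l) i q = g ((q : ℕ) + l) := by
  set t : ZMod N := ((q : ℕ) : ZMod N) + l
  calc (M * cyclicShift N l) i q
      = ∑ n : Fin N, if ZMod.finEquiv N n = t then g ((q : ℕ) + l) else (0 : ℂ) := by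
        rw [Matrix.mul_apply]
        refine Finset.sum_congr rfl fun n _ => ?_
        rw [ZMod.finEquiv_apply, cyclicShift, Matrix.of_apply, hM]
        split_ifs with hn
        · rw [mul_one]
          exact hg.eq_of_intCast_eq (by push_cast; exact hn)
        · rw [mul_zero]
    _ = ∑ x : ZMod N, if x = t then g ((q : ℕ) + l) else 0 :=
        Fintype.sum_equiv (ZMod.finEquiv N).toEquiv _ _ fun _ => rfl
    _ = g ((q : ℕ) + l) := by simp

lemma periodic_fourierChar_linear_sub_chirp {N : ℕ} (hN : N ≠ 0) (hEven : Even N) {a : ℝ} {c : ℤ}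
    (hc : 2 * N * a = c) (j : ℤ) (b : ℝ) :
    Periodic (fun n : ℤ => 𝐞 (j * n / N + b - a * n ^ 2)) N := by
  obtain ⟨M, hM⟩ := hEven
  have hNM : (N : ℝ) = 2 * M := by rw [hM]; push_cast; ring
  intro n
  have hlin : (j * ((n + N : ℤ) : ℝ) / N) = j * n / N + j := by
    push_cast
    field_simp
  -- the chirp advances by `c n + c M`, an integer, because `a N ^ 2 = c M`
  have hchirp : a * ((n + N : ℤ) : ℝ) ^ 2 = a * n ^ 2 + c * n + c * M := by
    push_cast
    linear_combination (n + M : ℝ) * hc + a * N * hNM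
  have hshift : j * ((n + N : ℤ) : ℝ) / N + b - a * ((n + N : ℤ) : ℝ) ^ 2
      = j * n / N + b - a * n ^ 2 + ((j - c * n - c * M : ℤ) : ℝ) := by
    rw [hlin, hchirp]
    push_cast
    ring
  simp only [hshift, fourierChar_add_intCast]

lemma daft_apply (N : ℕ) (c₁ c₂ : ℝ) (m n : Fin N) :
    daft N c₁ c₂ m n =
      𝐞 (-(c₂ * (m : ℕ) ^ 2 + (m : ℕ) * (n : ℕ) / N + c₁ * (n : ℕ) ^ 2)) / (√N : ℂ) := by
  simp only [daft, chirpMatrix, dftMatrix, Matrix.mul_diagonal, Matrix.diagonal_mul,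
    Matrix.of_apply, Real.fourierChar_apply]
  rw [mul_div_assoc', div_mul_eq_mul_div, ← Complex.exp_add, ← Complex.exp_add]
  congr 2
  push_cast
  ring

lemma daft_mul_dopplerShift_apply (N : ℕ) (c₁ c₂ : ℝ) (k : ℤ) (m n : Fin N) :
    (daft N c₁ c₂ * dopplerShift N k) m n =
      𝐞 ((k - (m : ℕ)) * (n : ℕ) / N - c₂ * (m : ℕ) ^ 2 - c₁ * (n : ℕ) ^ 2) / (√N : ℂ) := by
  rw [dopplerShift, Matrix.mul_diagonal, daft_apply, div_mul_eq_mul_div, Real.fourierChar_apply,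
    Real.fourierChar_apply, ← Complex.exp_add]
  congr 2
  push_cast
  ring

lemma coe_fourierChar_div_sqrt_mul (N : ℕ) (x y : ℝ) :
    (𝐞 x : ℂ) / (√N : ℂ) * ((𝐞 y : ℂ) / (√N : ℂ)) = 𝐞 (x + y) / N := by
  rw [div_mul_div_comm, ← Complex.ofReal_mul, Real.mul_self_sqrt (Nat.cast_nonneg N),
    AddChar.map_add_eq_mul, Circle.coe_mul, Complex.ofReal_natCast]

lemma subChannel_apply {N : ℕ} [NeZero N] (hEven : Even N) {c₁ : ℝ} (c₂ : ℝ) {c : ℤ}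
    (hc : 2 * (N : ℝ) * c₁ = c) (k l : ℤ) (m m' : Fin N) :
    subChannel N c₁ c₂ k l m m' =
      𝐞 (c₂ * ((m' : ℕ) ^ 2 - (m : ℕ) ^ 2) - c₁ * l ^ 2 + (k - (m : ℕ)) * l / N) *
        if (((m' : ℕ) + k - (m : ℕ) - c * l : ℤ) : ZMod N) = 0 then 1 else 0 := by
  set ψ : ℝ := c₂ * ((m' : ℕ) ^ 2 - (m : ℕ) ^ 2) - c₁ * l ^ 2 + (k - (m : ℕ)) * l / N
  set d : ℤ := (m' : ℕ) + k - (m : ℕ) - c * l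
  have hN : (N : ℝ) ≠ 0 := NeZero.ne _
  let g : ℤ → ℂ := fun n =>
    𝐞 (((k - (m : ℕ) : ℤ) : ℝ) * n / N + -(c₂ * (m : ℕ) ^ 2) - c₁ * n ^ 2) / (√N : ℂ)
  have hg : Periodic g N :=
    (periodic_fourierChar_linear_sub_chirp (NeZero.ne N) hEven hc _ _).comp
      fun z : Circle => (z : ℂ) / (√N : ℂ)
  have hrow (q : Fin N) :
      (daft N c₁ c₂ * dopplerShift N k * cyclicShift N l) m q = g ((q : ℕ) + l) := by
    refine mul_cyclicShift_apply_of_periodic _ m hg (fun n => ?_) l q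
    rw [daft_mul_dopplerShift_apply]
    congr 3
    push_cast
    ring
  have hterm (q : Fin N) : (daft N c₁ c₂ * dopplerShift N k * cyclicShift N l) m q *
      star (daft N c₁ c₂ m' q) = 𝐞 ψ * 𝐞 ((q : ℕ) * d / N) / N := by
    rw [hrow, daft_apply, star_div₀, Circle.star_addChar, Complex.star_def, Complex.conj_ofReal,
      coe_fourierChar_div_sqrt_mul, ← Circle.coe_mul, ← AddChar.map_add_eq_mul]
    congr 3
    simp only [ψ, d]
    push_cast
    field_simp
    linear_combination (-(q : ℕ) * l : ℝ) * hc
  rw [subChannel, Matrix.mul_apply]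
  simp only [Matrix.conjTranspose_apply, hterm]
  rw [← Finset.sum_div, ← Finset.mul_sum, sum_fourierChar_mul_div]
  split_ifs <;> simp [NeZero.ne]

theorem subChannel_entries_general (N : ℕ) (hEven : Even N)
    (c₁ c₂ : ℝ) (c : ℤ) (hc : 2 * (N : ℝ) * c₁ = (c : ℝ)) (k l : ℤ) (m m' : Fin N) :
    subChannel N c₁ c₂ k l m m' =
      if ((m' : ℕ) : ZMod N) = ((m : ℕ) : ZMod N) + ((c * l - k : ℤ) : ZMod N) then
        Complex.exp ((2 * Real.pi * Complex.I / (N : ℂ)) *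
          ((N : ℂ) * (c₁ : ℂ) * (l : ℂ) ^ 2 - ((m' : ℕ) : ℂ) * (l : ℂ) +
            (N : ℂ) * (c₂ : ℂ) * (((m' : ℕ) : ℂ) ^ 2 - ((m : ℕ) : ℂ) ^ 2)))
      else 0 := by
  have : NeZero N := NeZero.of_pos m.pos
  have hcond : (((m' : ℕ) + k - (m : ℕ) - c * l : ℤ) : ZMod N) = 0 ↔
      ((m' : ℕ) : ZMod N) = ((m : ℕ) : ZMod N) + ((c * l - k : ℤ) : ZMod N) := by
    rw [← sub_eq_zero (a := ((m' : ℕ) : ZMod N))]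
    push_cast
    ring_nf
  rw [subChannel_apply hEven c₂ hc]
  simp only [hcond]
  split_ifs with h
  · obtain ⟨j, hj⟩ := (ZMod.intCast_zmod_eq_zero_iff_dvd _ N).1 (hcond.2 h)
    have hN : (N : ℝ) ≠ 0 := NeZero.ne _
    have hphase : c₂ * ((m' : ℕ) ^ 2 - (m : ℕ) ^ 2) - c₁ * l ^ 2 + (k - (m : ℕ)) * l / N =
        (N * c₁ * l ^ 2 - (m' : ℕ) * l + N * c₂ * ((m' : ℕ) ^ 2 - (m : ℕ) ^ 2)) / N +
          ((j * l : ℤ) : ℝ) := by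
      have hjR : ((m' : ℕ) + k - (m : ℕ) - c * l : ℝ) = N * j := by exact_mod_cast hj
      push_cast
      field_simp
      linear_combination (l : ℝ) * hjR - (l : ℝ) ^ 2 * hc
    rw [mul_one, hphase, fourierChar_add_intCast, Real.fourierChar_apply]
    congr 1
    push_cast
    ring
  · rw [mul_zero]

/-- entrywise description of the DAFT-domain subchannel matrix.
`H(k,l)[m,m'] = e^{(2πi/N)(N c₁ l² − m' l + N c₂ (m'² − m²))}` if
`m' ≡ m + c l − k (mod N)` (where `c = 2 N c₁` is an integer), and `0` otherwise. -/
theorem subChannel_entries (N : ℕ) (hN : 0 < N) (hEven : Even N)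
    (c₁ c₂ : ℝ) (c : ℤ) (hc : 2 * (N : ℝ) * c₁ = (c : ℝ)) (k l : ℤ) (m m' : Fin N) :
    subChannel N c₁ c₂ k l m m' =
      if ((m' : ℕ) : ZMod N) = ((m : ℕ) : ZMod N) + ((c * l - k : ℤ) : ZMod N) then
        Complex.exp ((2 * Real.pi * Complex.I / (N : ℂ)) *
          ((N : ℂ) * (c₁ : ℂ) * (l : ℂ) ^ 2 - ((m' : ℕ) : ℂ) * (l : ℂ) +
            (N : ℂ) * (c₂ : ℂ) * (((m' : ℕ) : ℂ) ^ 2 - ((m : ℕ) : ℂ) ^ 2)))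
      else 0 :=
  subChannel_entries_general N hEven c₁ c₂ c hc k l m m'
end

section
/- Let K, L be positive integers and let X ∈ ℂ^{K×L}. Let vec(X) ∈ ℂ^{KL} be the column-wise vectorization, i.e., vec(X)[lK + k] = X[k,l] for 0 ≤ k < K, 0 ≤ l < L. For integers k̃ and l̃, the vector v = (I_L ⊗ Π_K^{k̃}) · Π_{KL}^{K l̃} · vec(X) satisfies v[lK + k] = X[(k − k̃) mod K, (l − l̃) mod L] for all 0 ≤ k < K and 0 ≤ l < L. That is, the MD-CDDS precoding matrix of OTFS, C = (I_L ⊗ Π_K^{k̃}) Π_{KL}^{K l̃}, implements the cyclic Doppler shift by k̃ steps and the cyclic delay shift by l̃ steps of the delay-Doppler symbol matrix X. -/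
open Matrix Complex Kronecker

/-- Column-wise vectorization of a `K × L` matrix: `vec(X)[l·K + k] = X[k, l]`. -/
def vecCol {K L : ℕ} (hK : 0 < K) (X : Matrix (Fin K) (Fin L) ℂ) : Fin (K * L) → ℂ :=
  fun i => X ⟨(i : ℕ) % K, Nat.mod_lt _ hK⟩
    ⟨(i : ℕ) / K, (Nat.div_lt_iff_lt_mul hK).mpr (lt_of_lt_of_eq i.isLt (Nat.mul_comm K L))⟩

/-- The index `l·K + k` of entry `X[k,l]` in the column-wise vectorization. -/
def vecIdx {K L : ℕ} (k : Fin K) (l : Fin L) : Fin (K * L) :=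
  ⟨(l : ℕ) * K + (k : ℕ), by
    have h1 := k.isLt
    have h2 := l.isLt
    calc (l : ℕ) * K + (k : ℕ) < ((l : ℕ) + 1) * K := by nlinarith
      _ ≤ L * K := Nat.mul_le_mul_right K h2
      _ = K * L := Nat.mul_comm L K⟩

/-- `a mod N` as an element of `Fin N`, for an integer `a`. -/
def modIdx {N : ℕ} (hN : 0 < N) (a : ℤ) : Fin N :=
  ⟨(a % (N : ℤ)).toNat, by
    have h1 : 0 ≤ a % (N : ℤ) := Int.emod_nonneg a (by exact_mod_cast hN.ne')
    have h2 : a % (N : ℤ) < (N : ℤ) := Int.emod_lt_of_pos a (by exact_mod_cast hN)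
    omega⟩

/-- The equivalence `Fin L × Fin K ≃ Fin (K·L)` sending `(l, k)` to `l·K + k`. -/
def colEquiv (K L : ℕ) : Fin L × Fin K ≃ Fin (K * L) :=
  finProdFinEquiv.trans (finCongr (Nat.mul_comm L K))

/-- The `[k̃,l̃]`-step MD-CDDS precoding matrix of OTFS:
`C = (I_L ⊗ Π_K^{k̃}) Π_{KL}^{K·l̃}`, with the Kronecker product reindexed so that the
row/column index `l·K + k` corresponds to the pair `(l, k)`. -/
noncomputable def mdcddsOTFS (K L : ℕ) (kt lt : ℤ) : Matrix (Fin (K * L)) (Fin (K * L)) ℂ :=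
  (Matrix.reindex (colEquiv K L) (colEquiv K L)
      ((1 : Matrix (Fin L) (Fin L) ℂ) ⊗ₖ cyclicShift K kt)) *
    cyclicShift (K * L) ((K : ℤ) * lt)

/-! The Kronecker factor `I_L ⊗ Π_K^{k̃}` acts on every length-`K` block of `vec(X)`, i.e. on every
column of `X`, as `Π_K^{k̃}`. The shift `Π_{KL}^{K l̃}` moves the index `l·K + k` by a multiple
of `K`; since `(l − l̃ mod L)·K ≡ (l − l̃)·K (mod K·L)`, it permutes whole columns, `l ↦ l − l̃`,
and leaves the position `k` inside a column unchanged. -/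

theorem coe_modIdx {N : ℕ} (hN : 0 < N) (a : ℤ) : ((modIdx hN a : ℕ) : ℤ) = a % N :=
  Int.toNat_of_nonneg (Int.emod_nonneg a (by exact_mod_cast hN.ne'))

theorem modIdx_eq_iff {N : ℕ} (hN : 0 < N) (a : ℤ) (q : Fin N) :
    modIdx hN a = q ↔ ((q : ℕ) : ℤ) ≡ a [ZMOD N] := by
  have hq : ((q : ℕ) : ℤ) % N = q := Int.emod_eq_of_lt (by positivity) (by exact_mod_cast q.isLt)
  rw [Fin.ext_iff, ← Int.natCast_inj, coe_modIdx, Int.ModEq, hq, eq_comm]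

theorem cyclicShift_mulVec {N : ℕ} (hN : 0 < N) (l : ℤ) (v : Fin N → ℂ) (p : Fin N) :
    (cyclicShift N l *ᵥ v) p = v (modIdx hN ((p : ℤ) - l)) := by
  have hsupp (q : Fin N) :
      ((p : ℕ) : ZMod N) = ((q : ℕ) : ZMod N) + l ↔ modIdx hN ((p : ℤ) - l) = q := by
    rw [modIdx_eq_iff, ← ZMod.intCast_eq_intCast_iff]
    push_cast
    rw [eq_sub_iff_add_eq, eq_comm]
  simp only [mulVec, dotProduct, cyclicShift, of_apply, hsupp, ite_mul, one_mul, zero_mul,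
    Finset.sum_ite_eq, Finset.mem_univ, if_true]

theorem reindex_one_kronecker_mulVec {R ι κ n : Type*} [Semiring R] [Fintype ι] [Fintype κ]
    [Fintype n] [DecidableEq ι] (e : ι × κ ≃ n) (A : Matrix κ κ R) (w : n → R) (i : ι) (k : κ) :
    (reindex e e (1 ⊗ₖ A) *ᵥ w) (e (i, k)) = (A *ᵥ fun k' => w (e (i, k'))) k := by
  rw [reindex_apply, submatrix_mulVec_equiv, Function.comp_apply, Equiv.symm_symm,
    Equiv.symm_apply_apply]
  simp [mulVec, dotProduct, Fintype.sum_prod_type, one_apply, ite_mul]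

theorem colEquiv_apply {K L : ℕ} (k : Fin K) (l : Fin L) : colEquiv K L (l, k) = vecIdx k l := by
  ext
  simp [colEquiv, vecIdx, add_comm, mul_comm]

theorem vecCol_vecIdx {K L : ℕ} (hK : 0 < K) (X : Matrix (Fin K) (Fin L) ℂ) (k : Fin K)
    (l : Fin L) : vecCol hK X (vecIdx k l) = X k l := by
  simp only [vecCol, vecIdx, Nat.add_comm _ (k : ℕ), Nat.add_mul_mod_self_right,
    Nat.add_mul_div_right _ _ hK, Nat.mod_eq_of_lt k.isLt, Nat.div_eq_of_lt k.isLt, Nat.zero_add]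

theorem modIdx_vecIdx_sub_mul {K L : ℕ} (hKL : 0 < K * L) (hL : 0 < L) (k : Fin K) (l : Fin L)
    (m : ℤ) :
    modIdx hKL (((vecIdx k l : ℕ) : ℤ) - K * m) = vecIdx k (modIdx hL ((l : ℤ) - m)) := by
  rw [modIdx_eq_iff]
  simp only [vecIdx]
  push_cast
  rw [coe_modIdx, mul_comm (K : ℤ) L]
  convert ((Int.mod_modEq ((l : ℤ) - m) L).mul_right' (c := (K : ℤ))).add_right (k : ℤ) using 1
  ring

/-- the MD-CDDS precoding matrix of OTFS implements the cyclic Doppler shift by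
`k̃` steps and the cyclic delay shift by `l̃` steps of the delay-Doppler symbol matrix `X`:
`((I_L ⊗ Π_K^{k̃}) Π_{KL}^{K l̃} vec(X))[l·K + k] = X[(k − k̃) mod K, (l − l̃) mod L]`. -/
theorem mdcdds_otfs_shift (K L : ℕ) (hK : 0 < K) (hL : 0 < L)
    (X : Matrix (Fin K) (Fin L) ℂ) (kt lt : ℤ) (k : Fin K) (l : Fin L) :
    (mdcddsOTFS K L kt lt *ᵥ vecCol hK X) (vecIdx k l) =
      X (modIdx hK ((k : ℤ) - kt)) (modIdx hL ((l : ℤ) - lt)) := by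
  have hKL : 0 < K * L := Nat.mul_pos hK hL
  rw [mdcddsOTFS, ← mulVec_mulVec, ← colEquiv_apply, reindex_one_kronecker_mulVec,
    cyclicShift_mulVec hK, colEquiv_apply, cyclicShift_mulVec hKL, modIdx_vecIdx_sub_mul hKL hL,
    vecCol_vecIdx]
end

section
/- Let N be a positive integer, c₁, c₂ real numbers, and l, l̃, m, m̄, m̃ integers, and set m' = (m̄ + m̃) mod N. Then the complex exponential identity e^{(2πi/N)(N c₁ l² − m' l + N c₂ (m'² − m²))} = 𝒜(l, l̃, m̃) · ℰ(m̄, m̃, l̃) · e^{(2πi/N)(N c₁ (l + l̃)² − m̄ (l + l̃) + N c₂ (m̄² − m²))} holds, where 𝒜(l, l̃, m̃) = e^{−(2πi/N)(N c₁ (2 l l̃ + l̃²) + m̃ l)} and ℰ(m̄, m̃, l̃) = e^{(2πi/N)(m̄ l̃ + N c₂ (((m̄ + m̃) mod N)² − m̄²))}. -/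
open Complex

-- For `N = 0` both sides are `exp 0`, as `2πi / 0 = 0` in Lean.
theorem exp_two_pi_I_div_mul_eq_of_sub_eq_mul (N : ℕ) {x y : ℂ} (k : ℤ) (h : x - y = N * k) :
    exp (2 * Real.pi * I / N * x) = exp (2 * Real.pi * I / N * y) := by
  rcases eq_or_ne N 0 with rfl | hN
  · simp
  rw [exp_eq_exp_iff_exists_int]
  refine ⟨k, ?_⟩
  rw [← sub_eq_iff_eq_add', ← mul_sub, h]
  field_simp

theorem mdcdds_phase_identity_general (N : ℕ) (c₁ c₂ : ℝ)
    (l lt m mbar mt : ℤ) :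
    Complex.exp ((2 * Real.pi * Complex.I / (N : ℂ)) *
        ((N : ℂ) * (c₁ : ℂ) * (l : ℂ) ^ 2 -
          (((mbar + mt) % (N : ℤ) : ℤ) : ℂ) * (l : ℂ) +
          (N : ℂ) * (c₂ : ℂ) * ((((mbar + mt) % (N : ℤ) : ℤ) : ℂ) ^ 2 - (m : ℂ) ^ 2))) =
      Complex.exp (-((2 * Real.pi * Complex.I / (N : ℂ)) *
          ((N : ℂ) * (c₁ : ℂ) * (2 * (l : ℂ) * (lt : ℂ) + (lt : ℂ) ^ 2) + (mt : ℂ) * (l : ℂ)))) *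
        Complex.exp ((2 * Real.pi * Complex.I / (N : ℂ)) *
          ((mbar : ℂ) * (lt : ℂ) +
            (N : ℂ) * (c₂ : ℂ) * ((((mbar + mt) % (N : ℤ) : ℤ) : ℂ) ^ 2 - (mbar : ℂ) ^ 2))) *
        Complex.exp ((2 * Real.pi * Complex.I / (N : ℂ)) *
          ((N : ℂ) * (c₁ : ℂ) * ((l : ℂ) + (lt : ℂ)) ^ 2 -
            (mbar : ℂ) * ((l : ℂ) + (lt : ℂ)) +
            (N : ℂ) * (c₂ : ℂ) * ((mbar : ℂ) ^ 2 - (m : ℂ) ^ 2))) := by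
  have hdiv : ((mbar + mt : ℤ) : ℂ) = ((mbar + mt) % N : ℤ) + N * ((mbar + mt) / N : ℤ) := by
    exact_mod_cast (Int.emod_add_mul_ediv (mbar + mt) N).symm
  -- In one exponent, the right side has `-(mbar + mt) l` where the left has `-m' l`;
  -- the difference is `N * ((mbar + mt) / N) * l`.
  rw [← mul_neg, ← exp_add, ← exp_add, ← mul_add, ← mul_add]
  apply exp_two_pi_I_div_mul_eq_of_sub_eq_mul N ((mbar + mt) / N * l)
  push_cast at hdiv ⊢
  linear_combination l * hdiv

/-- the complex exponential identity used in the MD-CDDS derivation for AFDM.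
With `m' = (m̄ + m̃) mod N`,
`e^{(2πi/N)(N c₁ l² − m' l + N c₂ (m'² − m²))}
  = 𝒜(l, l̃, m̃) · ℰ(m̄, m̃, l̃) · e^{(2πi/N)(N c₁ (l+l̃)² − m̄ (l+l̃) + N c₂ (m̄² − m²))}`,
where `𝒜(l, l̃, m̃) = e^{−(2πi/N)(N c₁ (2 l l̃ + l̃²) + m̃ l)}` and
`ℰ(m̄, m̃, l̃) = e^{(2πi/N)(m̄ l̃ + N c₂ (((m̄+m̃) mod N)² − m̄²))}`. -/
theorem mdcdds_phase_identity (N : ℕ) (hN : 0 < N) (c₁ c₂ : ℝ)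
    (l lt m mbar mt : ℤ) :
    Complex.exp ((2 * Real.pi * Complex.I / (N : ℂ)) *
        ((N : ℂ) * (c₁ : ℂ) * (l : ℂ) ^ 2 -
          (((mbar + mt) % (N : ℤ) : ℤ) : ℂ) * (l : ℂ) +
          (N : ℂ) * (c₂ : ℂ) * ((((mbar + mt) % (N : ℤ) : ℤ) : ℂ) ^ 2 - (m : ℂ) ^ 2))) =
      Complex.exp (-((2 * Real.pi * Complex.I / (N : ℂ)) *
          ((N : ℂ) * (c₁ : ℂ) * (2 * (l : ℂ) * (lt : ℂ) + (lt : ℂ) ^ 2) + (mt : ℂ) * (l : ℂ)))) *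
        Complex.exp ((2 * Real.pi * Complex.I / (N : ℂ)) *
          ((mbar : ℂ) * (lt : ℂ) +
            (N : ℂ) * (c₂ : ℂ) * ((((mbar + mt) % (N : ℤ) : ℤ) : ℂ) ^ 2 - (mbar : ℂ) ^ 2))) *
        Complex.exp ((2 * Real.pi * Complex.I / (N : ℂ)) *
          ((N : ℂ) * (c₁ : ℂ) * ((l : ℂ) + (lt : ℂ)) ^ 2 -
            (mbar : ℂ) * ((l : ℂ) + (lt : ℂ)) +
            (N : ℂ) * (c₂ : ℂ) * ((mbar : ℂ) ^ 2 - (m : ℂ) ^ 2))) :=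
  mdcdds_phase_identity_general N c₁ c₂ l lt m mbar mt
end

section
/- Let K', l_max, N be nonnegative integers with N ≥ (l_max + 1)(2K' + 1), and set c = 2K' + 1. Then the map (l, k) ↦ (c l − k) mod N is injective on the rectangle {0,…,l_max} × {−K',…,K'}: if 0 ≤ l, l' ≤ l_max, |k| ≤ K', |k'| ≤ K', and c l − k ≡ c l' − k' (mod N), then l = l' and k = k'. In particular, with the AFDM parameter c₁ = (2K' + 1)/(2N), distinct channel paths whose delays lie in [0, l_max] and Dopplers lie in [−K', K'] have distinct DAFT-domain index indicators, so all such paths are separated in the DAFT domain. -/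
/-- if `N ≥ (l_max + 1)(2K' + 1)` and `c = 2K' + 1`, then the map
`(l, k) ↦ (c l − k) mod N` is injective on `{0,…,l_max} × {−K',…,K'}`: distinct channel paths
whose delays lie in `[0, l_max]` and Dopplers lie in `[−K', K']` have distinct DAFT-domain
index indicators, so all such paths are separated in the DAFT domain. -/
theorem afdm_index_indicator_injective (K' lmax N : ℕ)
    (hN : N ≥ (lmax + 1) * (2 * K' + 1))
    (l l' k k' : ℤ)
    (hl0 : 0 ≤ l) (hl1 : l ≤ (lmax : ℤ)) (hl0' : 0 ≤ l') (hl1' : l' ≤ (lmax : ℤ))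
    (hk : |k| ≤ (K' : ℤ)) (hk' : |k'| ≤ (K' : ℤ))
    (hmod : (2 * (K' : ℤ) + 1) * l - k ≡ (2 * (K' : ℤ) + 1) * l' - k' [ZMOD (N : ℤ)]) :
    l = l' ∧ k = k' := by
  set c : ℤ := 2 * (K' : ℤ) + 1 with hc
  have hNZ : (N : ℤ) ≥ ((lmax : ℤ) + 1) * c := by rw [hc]; exact_mod_cast hN
  obtain ⟨hk1, hk2⟩ := abs_le.mp hk
  obtain ⟨hk1', hk2'⟩ := abs_le.mp hk'
  have hcl : c * l ≤ c * (lmax : ℤ) := by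
    apply mul_le_mul_of_nonneg_left hl1; positivity
  have hcl' : c * l' ≤ c * (lmax : ℤ) := by
    apply mul_le_mul_of_nonneg_left hl1'; positivity
  have hcl0 : 0 ≤ c * l := by positivity
  have hcl0' : 0 ≤ c * l' := by positivity
  have hd : (N : ℤ) ∣ (c * l' - k') - (c * l - k) := hmod.dvd
  have hzero : (c * l' - k') - (c * l - k) = 0 := by
    apply Int.eq_zero_of_abs_lt_dvd hd
    rw [abs_lt]
    constructor <;> nlinarith
  have heq : c * (l - l') = k - k' := by linear_combination -hzero
  by_cases h : l = l'
  · subst h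
    refine ⟨rfl, by linarith⟩
  · exfalso
    have h1 : 1 ≤ |l - l'| := Int.one_le_abs (sub_ne_zero.mpr h)
    have h2 : |c * (l - l')| = c * |l - l'| := by
      rw [abs_mul, abs_of_nonneg (by positivity : (0:ℤ) ≤ c)]
    have h3 : c ≤ |k - k'| := by
      rw [← heq, h2]; nlinarith
    have h4 : |k - k'| ≤ 2 * (K' : ℤ) := by
      calc |k - k'| ≤ |k| + |k'| := abs_sub k k'
        _ ≤ 2 * K' := by linarith
    linarith
end

section
/- Let N be an even positive integer, c₂ real, and c₁ = (2K' + 1)/(2N) for a nonnegative integer K', and suppose N ≥ (l_max + 1)(2K' + 1) for a nonnegative integer l_max. Let (k₁, l₁) ≠ (k₂, l₂) be two distinct pairs with 0 ≤ l₁, l₂ ≤ l_max and |k₁|, |k₂| ≤ K'. Then the DAFT-domain subchannel matrices H(k₁, l₁) and H(k₂, l₂) have disjoint supports: for all m, m' ∈ {0,…,N−1}, H(k₁, l₁)[m, m'] · H(k₂, l₂)[m, m'] = 0. -/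
open Matrix Complex

lemma exp_congr_int (N : ℕ) (hN : 0 < N) (x y : ℤ) (h : (2 * (N : ℤ)) ∣ (x - y)) :
    Complex.exp (2 * Real.pi * Complex.I * (x : ℂ) / (2 * (N : ℂ)))
      = Complex.exp (2 * Real.pi * Complex.I * (y : ℂ) / (2 * (N : ℂ))) := by
  have hNC : (N : ℂ) ≠ 0 := Nat.cast_ne_zero.mpr hN.ne'
  obtain ⟨t, ht⟩ := h
  have hx : (x : ℂ) = (y : ℂ) + 2 * (N : ℂ) * (t : ℂ) := by
    have h' : x = y + 2 * (N : ℤ) * t := by linarith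
    exact_mod_cast congrArg (Int.cast : ℤ → ℂ) h'
  rw [hx, show 2 * (Real.pi : ℂ) * Complex.I * ((y : ℂ) + 2 * (N : ℂ) * (t : ℂ)) / (2 * (N : ℂ))
      = 2 * Real.pi * Complex.I * (y : ℂ) / (2 * (N : ℂ)) + (t : ℂ) * (2 * Real.pi * Complex.I)
      from by field_simp]
  rw [Complex.exp_add, Complex.exp_int_mul_two_pi_mul_I, mul_one]

lemma subChannel_eq_zero (N K' : ℕ) (hN : 0 < N) (hEven : Even N) (c₂ : ℝ)
    (k l : ℤ) (m m' : Fin N)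
    (hθ : ¬ ((N : ℤ) ∣ (((m' : ℕ) : ℤ) - ((m : ℕ) : ℤ) + k - (2 * (K' : ℤ) + 1) * l))) :
    subChannel N ((2 * (K' : ℝ) + 1) / (2 * (N : ℝ))) c₂ k l m m' = 0 := by
  haveI : NeZero N := ⟨hN.ne'⟩
  set c₁ : ℝ := (2 * (K' : ℝ) + 1) / (2 * (N : ℝ)) with hc₁
  set τ : Fin N → Fin N := fun q => ⟨((((q : ℕ) : ZMod N)) + (l : ZMod N)).val, ZMod.val_lt _⟩
    with hτ
  have hτcast : ∀ q : Fin N, (((τ q : ℕ) : ZMod N)) = ((q : ℕ) : ZMod N) + (l : ZMod N) := by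
    intro q
    exact ZMod.natCast_rightInverse _
  -- step 1 : single-sum formula
  have h1 : subChannel N c₁ c₂ k l m m' =
      ∑ q : Fin N, (daft N c₁ c₂ m (τ q) *
        Complex.exp (2 * Real.pi * Complex.I * (k : ℂ) * ((τ q : ℕ) : ℂ) / (N : ℂ))) *
        (starRingEnd ℂ) (daft N c₁ c₂ m' q) := by
    rw [subChannel, Matrix.mul_apply]
    refine Finset.sum_congr rfl fun q _ => ?_
    rw [Matrix.conjTranspose_apply, Matrix.mul_apply]
    have hsum : ∀ p : Fin N, (daft N c₁ c₂ * dopplerShift N k) m p * cyclicShift N l p q =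
        if p = τ q then (daft N c₁ c₂ * dopplerShift N k) m (τ q) else 0 := by
      intro p
      by_cases hp : p = τ q
      · subst hp
        simp [cyclicShift, hτcast q]
      · have hcond : ¬ (((p : ℕ) : ZMod N) = ((q : ℕ) : ZMod N) + (l : ZMod N)) := by
          intro hcon
          apply hp
          have heq := hcon.trans (hτcast q).symm
          have hval := congrArg ZMod.val heq
          rw [ZMod.val_natCast, ZMod.val_natCast, Nat.mod_eq_of_lt p.isLt,
            Nat.mod_eq_of_lt (τ q).isLt] at hval
          exact Fin.ext hval
        simp [cyclicShift, hcond, hp]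
    rw [Finset.sum_congr rfl fun p _ => hsum p, Finset.sum_ite_eq' Finset.univ (τ q)]
    simp [Matrix.mul_diagonal, dopplerShift, mul_comm]
  rw [h1]
  set θ : ℤ := ((m' : ℕ) : ℤ) - ((m : ℕ) : ℤ) + k - (2 * (K' : ℤ) + 1) * l with hθdef
  set ζ : ℂ := Complex.exp (2 * Real.pi * Complex.I * (θ : ℂ) / (N : ℂ)) with hζ
  set bb : ℤ := -(2 * (K' : ℤ) + 1) * l ^ 2 - 2 * ((m : ℕ) : ℤ) * l + 2 * k * l with hbb
  set Kc : ℂ := Complex.exp (-(2 * Real.pi * Complex.I * (c₂ : ℂ) * ((m : ℕ) : ℂ) ^ 2)) *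
      Complex.exp (2 * Real.pi * Complex.I * (c₂ : ℂ) * ((m' : ℕ) : ℂ) ^ 2) *
      Complex.exp (2 * Real.pi * Complex.I * (bb : ℂ) / (2 * (N : ℂ))) / (N : ℂ) with hK
  have hNC : (N : ℂ) ≠ 0 := Nat.cast_ne_zero.mpr hN.ne'
  have h2 : ∀ q : Fin N, (daft N c₁ c₂ m (τ q) *
        Complex.exp (2 * Real.pi * Complex.I * (k : ℂ) * ((τ q : ℕ) : ℂ) / (N : ℂ))) *
        (starRingEnd ℂ) (daft N c₁ c₂ m' q) = Kc * ζ ^ (q : ℕ) := by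
    intro q
    simp only [daft, Matrix.mul_diagonal, Matrix.diagonal_mul, chirpMatrix, dftMatrix,
      Matrix.of_apply, _root_.map_mul, map_div₀, ← Complex.exp_conj, map_neg, Complex.conj_I,
      Complex.conj_ofReal, map_ofNat, Complex.conj_natCast, map_pow]
    set P : ℕ := ((((q : ℕ) : ZMod N)) + (l : ZMod N)).val with hPdef
    have hPc : ((P : ℕ) : ZMod N) = ((q : ℕ) : ZMod N) + (l : ZMod N) :=
      ZMod.natCast_rightInverse _
    obtain ⟨t, ht⟩ : (N : ℤ) ∣ ((P : ℤ) - (((q : ℕ) : ℤ) + l)) := by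
      have hz : (((P : ℤ) - (((q : ℕ) : ℤ) + l) : ℤ) : ZMod N) = 0 := by
        push_cast
        rw [hPc]
        ring
      exact (ZMod.intCast_zmod_eq_zero_iff_dvd _ _).mp hz
    have hPZ : ((P : ℕ) : ℤ) = ((q : ℕ) : ℤ) + l + (N : ℤ) * t := by linarith
    have hcomb : ∀ x y : ℤ,
        Complex.exp (2 * Real.pi * Complex.I * (x : ℂ) / (2 * (N : ℂ))) *
          Complex.exp (2 * Real.pi * Complex.I * (y : ℂ) / (2 * (N : ℂ)))
        = Complex.exp (2 * Real.pi * Complex.I * ((x + y : ℤ) : ℂ) / (2 * (N : ℂ))) := by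
      intro x y
      rw [← Complex.exp_add]
      congr 1
      push_cast
      ring
    have e₂ : Complex.exp (-(2 * Real.pi * Complex.I * ((m : ℕ) : ℂ) * ((P : ℕ) : ℂ) / (N : ℂ)))
        = Complex.exp (2 * Real.pi * Complex.I *
            ((-(2 * ((m : ℕ) : ℤ) * (P : ℤ)) : ℤ) : ℂ) / (2 * (N : ℂ))) := by
      congr 1
      push_cast
      field_simp
    have e₃ : Complex.exp (-(2 * Real.pi * Complex.I * (c₁ : ℂ) * ((P : ℕ) : ℂ) ^ 2))
        = Complex.exp (2 * Real.pi * Complex.I *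
            ((-((2 * (K' : ℤ) + 1) * (P : ℤ) ^ 2) : ℤ) : ℂ) / (2 * (N : ℂ))) := by
      congr 1
      rw [hc₁]
      push_cast
      field_simp
    have e₄ : Complex.exp (2 * Real.pi * Complex.I * (k : ℂ) * ((P : ℕ) : ℂ) / (N : ℂ))
        = Complex.exp (2 * Real.pi * Complex.I *
            ((2 * k * (P : ℤ) : ℤ) : ℂ) / (2 * (N : ℂ))) := by
      congr 1
      push_cast
      field_simp
    have e₅ : Complex.exp (-(2 * Real.pi * -Complex.I * (c₂ : ℂ) * ((m' : ℕ) : ℂ) ^ 2))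
        = Complex.exp (2 * Real.pi * Complex.I * (c₂ : ℂ) * ((m' : ℕ) : ℂ) ^ 2) := by
      congr 1
      ring
    have e₆ : Complex.exp (-(2 * Real.pi * -Complex.I * ((m' : ℕ) : ℂ) * ((q : ℕ) : ℂ) / (N : ℂ)))
        = Complex.exp (2 * Real.pi * Complex.I *
            ((2 * ((m' : ℕ) : ℤ) * ((q : ℕ) : ℤ) : ℤ) : ℂ) / (2 * (N : ℂ))) := by
      congr 1
      push_cast
      field_simp
    have e₇ : Complex.exp (-(2 * Real.pi * -Complex.I * (c₁ : ℂ) * ((q : ℕ) : ℂ) ^ 2))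
        = Complex.exp (2 * Real.pi * Complex.I *
            (((2 * (K' : ℤ) + 1) * ((q : ℕ) : ℤ) ^ 2 : ℤ) : ℂ) / (2 * (N : ℂ))) := by
      congr 1
      rw [hc₁]
      push_cast
      field_simp
    have eθ : Complex.exp (((q : ℕ) : ℂ) * (2 * Real.pi * Complex.I * (θ : ℂ) / (N : ℂ)))
        = Complex.exp (2 * Real.pi * Complex.I *
            ((2 * ((q : ℕ) : ℤ) * θ : ℤ) : ℂ) / (2 * (N : ℂ))) := by
      congr 1
      push_cast
      field_simp
    rw [hζ, ← Complex.exp_nat_mul, hK, e₂, e₃, e₄, e₅, e₆, e₇, eθ]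
    rw [show ∀ E E' x₂ x₃ x₄ x₆ x₇ s : ℂ,
        E * (x₂ / s) * x₃ * x₄ * (E' * (x₆ / s) * x₇)
        = E * E' * (x₂ * x₃ * x₄ * x₆ * x₇) / (s * s) from fun E E' x₂ x₃ x₄ x₆ x₇ s => by ring]
    rw [show ∀ E E' xb xt : ℂ, E * E' * xb / (N : ℂ) * xt = E * E' * (xb * xt) / (N : ℂ)
        from fun E E' xb xt => by ring]
    rw [hcomb, hcomb, hcomb, hcomb, hcomb]
    rw [show ((Real.sqrt N : ℝ) : ℂ) * ((Real.sqrt N : ℝ) : ℂ) = (N : ℂ) from by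
      rw [← Complex.ofReal_mul, Real.mul_self_sqrt (Nat.cast_nonneg N)]
      norm_cast]
    congr 2
    apply exp_congr_int N hN
    obtain ⟨M, hM⟩ := hEven
    have hNZ : (N : ℤ) = 2 * (M : ℤ) := by omega
    refine ⟨t * ((k - ((m : ℕ) : ℤ)) - (2 * (K' : ℤ) + 1) * (((q : ℕ) : ℤ) + l + (M : ℤ) * t)), ?_⟩
    rw [hθdef, hbb, hPZ, hNZ]
    ring
  rw [Finset.sum_congr rfl fun q _ => h2 q, ← Finset.mul_sum]
  have hζN : ζ ^ N = 1 := by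
    rw [hζ, ← Complex.exp_nat_mul]
    rw [show (N : ℂ) * (2 * Real.pi * Complex.I * (θ : ℂ) / (N : ℂ))
        = (θ : ℂ) * (2 * Real.pi * Complex.I) by field_simp]
    exact Complex.exp_int_mul_two_pi_mul_I θ
  have h2pi : (2 * (Real.pi : ℂ) * Complex.I) ≠ 0 :=
    mul_ne_zero (mul_ne_zero two_ne_zero (Complex.ofReal_ne_zero.mpr Real.pi_ne_zero))
      Complex.I_ne_zero
  have hζ1 : ζ ≠ 1 := by
    intro hcon
    rw [hζ, Complex.exp_eq_one_iff] at hcon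
    obtain ⟨n, hn⟩ := hcon
    apply hθ
    refine ⟨n, ?_⟩
    have h4 := congrArg (fun z => z * (N : ℂ)) hn
    rw [div_mul_cancel₀ _ hNC] at h4
    have h3 : (2 * (Real.pi : ℂ) * Complex.I) * (θ : ℂ)
        = (2 * (Real.pi : ℂ) * Complex.I) * ((N : ℂ) * n) := by linear_combination h4
    have h5 := mul_left_cancel₀ h2pi h3
    exact_mod_cast h5
  rw [show (∑ q : Fin N, ζ ^ (q : ℕ)) = ∑ i ∈ Finset.range N, ζ ^ i from
    Fin.sum_univ_eq_sum_range (fun i => ζ ^ i) N]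
  rw [geom_sum_eq hζ1, hζN]
  simp

/-- with AFDM parameter `c₁ = (2K'+1)/(2N)` and `N ≥ (l_max+1)(2K'+1)`, the
DAFT-domain subchannel matrices of two distinct paths `(k₁,l₁) ≠ (k₂,l₂)` with delays in
`[0, l_max]` and Dopplers in `[−K', K']` have disjoint supports:
`H(k₁,l₁)[m,m'] · H(k₂,l₂)[m,m'] = 0` for all `m, m'`. -/
theorem subChannel_disjoint_support (N K' lmax : ℕ) (hN : 0 < N) (hEven : Even N)
    (c₂ : ℝ) (hNbig : N ≥ (lmax + 1) * (2 * K' + 1))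
    (k₁ l₁ k₂ l₂ : ℤ) (hne : (k₁, l₁) ≠ (k₂, l₂))
    (hl₁0 : 0 ≤ l₁) (hl₁1 : l₁ ≤ (lmax : ℤ)) (hl₂0 : 0 ≤ l₂) (hl₂1 : l₂ ≤ (lmax : ℤ))
    (hk₁ : |k₁| ≤ (K' : ℤ)) (hk₂ : |k₂| ≤ (K' : ℤ)) (m m' : Fin N) :
    subChannel N ((2 * (K' : ℝ) + 1) / (2 * (N : ℝ))) c₂ k₁ l₁ m m' *
      subChannel N ((2 * (K' : ℝ) + 1) / (2 * (N : ℝ))) c₂ k₂ l₂ m m' = 0 := by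
  set θ₁ : ℤ := ((m' : ℕ) : ℤ) - ((m : ℕ) : ℤ) + k₁ - (2 * (K' : ℤ) + 1) * l₁ with hθ₁
  set θ₂ : ℤ := ((m' : ℕ) : ℤ) - ((m : ℕ) : ℤ) + k₂ - (2 * (K' : ℤ) + 1) * l₂ with hθ₂
  have hkey : ¬ ((N : ℤ) ∣ θ₁) ∨ ¬ ((N : ℤ) ∣ θ₂) := by
    by_contra hcon
    push_neg at hcon
    obtain ⟨hd₁, hd₂⟩ := hcon
    have hdd : (N : ℤ) ∣ (θ₁ - θ₂) := dvd_sub hd₁ hd₂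
    have hval : θ₁ - θ₂ = (k₁ - k₂) - (2 * (K' : ℤ) + 1) * (l₁ - l₂) := by
      rw [hθ₁, hθ₂]; ring
    obtain ⟨hk₁l, hk₁r⟩ := abs_le.mp hk₁
    obtain ⟨hk₂l, hk₂r⟩ := abs_le.mp hk₂
    have hNbig' : ((lmax : ℤ) + 1) * (2 * (K' : ℤ) + 1) ≤ (N : ℤ) := by exact_mod_cast hNbig
    have hDub : (2 * (K' : ℤ) + 1) * (l₁ - l₂) ≤ (2 * (K' : ℤ) + 1) * (lmax : ℤ) := by
      apply mul_le_mul_of_nonneg_left (by linarith) (by positivity)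
    have hDlb : -((2 * (K' : ℤ) + 1) * (lmax : ℤ)) ≤ (2 * (K' : ℤ) + 1) * (l₁ - l₂) := by
      rw [← mul_neg]
      apply mul_le_mul_of_nonneg_left (by linarith) (by positivity)
    have habs : |θ₁ - θ₂| < (N : ℤ) := by
      rw [hval]
      rw [abs_lt]
      constructor <;> nlinarith [hDub, hDlb, hNbig', hk₁l, hk₁r, hk₂l, hk₂r]
    have h0 : θ₁ - θ₂ = 0 := Int.eq_zero_of_abs_lt_dvd hdd habs
    have hEq : k₁ - k₂ = (2 * (K' : ℤ) + 1) * (l₁ - l₂) := by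
      rw [hval] at h0; linarith
    have hll : l₁ = l₂ := by
      by_contra hl
      have h1 : (1 : ℤ) ≤ |l₁ - l₂| := Int.one_le_abs (sub_ne_zero.mpr hl)
      have h2 : (2 * (K' : ℤ) + 1) ≤ |(2 * (K' : ℤ) + 1) * (l₁ - l₂)| := by
        rw [abs_mul, abs_of_pos (by positivity : (0:ℤ) < 2 * (K' : ℤ) + 1)]
        nlinarith
      rw [← hEq] at h2
      have h3 : |k₁ - k₂| ≤ 2 * (K' : ℤ) := abs_le.mpr ⟨by linarith, by linarith⟩
      linarith
    have hkk : k₁ = k₂ := by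
      rw [hll] at hEq
      simp at hEq
      omega
    exact hne (by rw [hll, hkk])
  rcases hkey with h | h
  · rw [subChannel_eq_zero N K' hN hEven c₂ k₁ l₁ m m' (by rw [← hθ₁] at *; exact h), zero_mul]
  · rw [subChannel_eq_zero N K' hN hEven c₂ k₂ l₂ m m' (by rw [← hθ₂] at *; exact h), mul_zero]
end
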